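/- arXiv:2402.01504 — 3 statements merged into one kernel-verified Lean document; each statement's English description precedes it below -/
import Mathlib

section
/- Let G be a locally profinite group, K ⊆ G a compact open subgroup, k a field, V a smooth k-linear representation of K, and U ⊆ G an open subgroup. Then the space of U-invariant vectors in the smooth induction Ind_K^G(V) is isomorphic to the inverse limit, over the groupoid whose objects are cosets x ∈ G/U with morphisms Hom(x,y) = {κ ∈ K : κx = y}, of the functor sending x to the fixed-point space V^{K ∩ xUx⁻¹} (with κ acting by v ↦ κv). -/
/-!
STATEMENT 0: For a locally profinite group `G`, a compact open subgroup `K`, a field `k`,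
a smooth `k`-linear representation `V` of `K` and an open subgroup `U ⊆ G`, the space of
`U`-invariants of the smooth induction `Ind_K^G(V)` is isomorphic to the limit, over the
action groupoid of `K` acting on `G/U`, of the functor `x ↦ V^{K ∩ xUx⁻¹}` (with `κ` acting
by `v ↦ κ • v`).
-/

section Core

variable (k G V : Type) [Field k] [Group G] [TopologicalSpace G]
  [AddCommGroup V] [Module k V]

/-- An action is *smooth* if every vector has an open subgroup of stabilizers. -/
def SmoothAct (G V : Type) [Group G] [TopologicalSpace G] [SMul G V] : Prop :=
  ∀ v : V, ∃ U : Subgroup G, IsOpen (U : Set G) ∧ ∀ u ∈ U, u • v = v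

variable (K : Subgroup G) [DistribMulAction ↥K V] [SMulCommClass ↥K k V]

/-- Smooth induction `Ind_K^G(V)`: functions `f : G → V` with `f (κ * g) = κ • f g` which
are invariant under right translation by some open subgroup. -/
def SmoothInd : Submodule k (G → V) where
  carrier := {f | (∀ (κ : K) (g : G), f ((κ : G) * g) = κ • f g) ∧
      ∃ U : Subgroup G, IsOpen (U : Set G) ∧ ∀ (g : G), ∀ u ∈ U, f (g * u) = f g}
  add_mem' := by
    rintro f g ⟨hf1, U1, hU1, hf2⟩ ⟨hg1, U2, hU2, hg2⟩
    refine ⟨fun κ x => by simp [hf1, hg1, smul_add], U1 ⊓ U2, ?_, ?_⟩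
    · simpa using hU1.inter hU2
    · rintro x u ⟨hu1, hu2⟩
      simp [hf2 x u hu1, hg2 x u hu2]
  zero_mem' := ⟨fun κ g => by simp, ⊤, by simpa using isOpen_univ, fun g u _ => rfl⟩
  smul_mem' := by
    rintro c f ⟨hf1, U1, hU1, hf2⟩
    exact ⟨fun κ x => by simp [hf1, smul_comm], U1, hU1, fun g u hu => by simp [hf2 g u hu]⟩

/-- The `U`-invariants of `Ind_K^G(V)` (for the right translation action of `G`). -/
def SmoothIndInv (U : Subgroup G) : Submodule k (G → V) where
  carrier := {f | f ∈ SmoothInd k G V K ∧ ∀ (g : G), ∀ u ∈ U, f (g * u) = f g}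
  add_mem' := by
    rintro f g ⟨hf, hf2⟩ ⟨hg, hg2⟩
    exact ⟨add_mem hf hg, fun x u hu => by simp [hf2 x u hu, hg2 x u hu]⟩
  zero_mem' := ⟨zero_mem _, fun g u _ => rfl⟩
  smul_mem' := by
    rintro c f ⟨hf, hf2⟩
    exact ⟨Submodule.smul_mem _ c hf, fun g u hu => by simp [hf2 g u hu]⟩

/-- The limit of the functor `x ↦ V^{K ∩ xUx⁻¹}` over the action groupoid `K ↷ G/U`:
families `c`, constant on cosets `xU` (i.e. functions on `G/U`), with
`c x ∈ V^{K ∩ xUx⁻¹}` and `c (κ x) = κ • c x` (the structure isomorphisms of the functor). -/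
def GroupoidLimit (U : Subgroup G) : Submodule k (G → V) where
  carrier := {c | (∀ (x : G), ∀ u ∈ U, c (x * u) = c x) ∧
      (∀ (x : G) (κ : K), (∃ u ∈ U, (κ : G) = x * u * x⁻¹) → κ • c x = c x) ∧
      (∀ (κ : K) (x : G), c ((κ : G) * x) = κ • c x)}
  add_mem' := by
    rintro f g ⟨hf1, hf2, hf3⟩ ⟨hg1, hg2, hg3⟩
    exact ⟨fun x u hu => by simp [hf1 x u hu, hg1 x u hu],
      fun x κ h => by simp [smul_add, hf2 x κ h, hg2 x κ h],
      fun κ x => by simp [hf3, hg3, smul_add]⟩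
  zero_mem' := ⟨fun x u _ => rfl, fun x κ _ => by simp, fun κ x => by simp⟩
  smul_mem' := by
    rintro c f ⟨hf1, hf2, hf3⟩
    exact ⟨fun x u hu => by simp [hf1 x u hu],
      fun x κ h => by simp [smul_comm, hf2 x κ h],
      fun κ x => by simp [hf3, smul_comm]⟩

end Core


/-!
Both sides are subspaces of `G → V`. A `U`-invariant, left `K`-equivariant function on `G` is
smooth (witnessed by `U` itself), and it is automatically a compatible family of fixed vectors:
if `κ = x u x⁻¹` with `u ∈ U`, then `κ • f x = f (κ x) = f (x u) = f x`. So the two subspaces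
coincide.
-/

theorem smul_eq_self_of_eq_conj {G V : Type} [Group G] {K U : Subgroup G} [SMul K V]
    {f : G → V} (hK : ∀ (κ : K) (g : G), f ((κ : G) * g) = κ • f g)
    (hU : ∀ (g : G), ∀ u ∈ U, f (g * u) = f g) {x : G} {κ : K} {u : G} (hu : u ∈ U)
    (hκ : (κ : G) = x * u * x⁻¹) : κ • f x = f x := by
  rw [← hK κ x, hκ, show x * u * x⁻¹ * x = x * u by group, hU x u hu]

theorem smoothIndInv_eq_groupoidLimit (k G V : Type) [Field k] [Group G] [TopologicalSpace G]
    [AddCommGroup V] [Module k V] (K : Subgroup G) [DistribMulAction K V] [SMulCommClass K k V]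
    (U : Subgroup G) (hUopen : IsOpen (U : Set G)) :
    SmoothIndInv k G V K U = GroupoidLimit k G V K U := by
  ext f
  constructor
  · rintro ⟨⟨hK, -⟩, hU⟩
    exact ⟨hU, fun x κ ⟨u, hu, hκ⟩ => smul_eq_self_of_eq_conj hK hU hu hκ, hK⟩
  · rintro ⟨hU, -, hK⟩
    exact ⟨⟨hK, U, hUopen, hU⟩, hU⟩

theorem statement0_general (k G V : Type) [Field k] [Group G] [TopologicalSpace G]
    [AddCommGroup V] [Module k V]
    (K : Subgroup G) [DistribMulAction ↥K V] [SMulCommClass ↥K k V]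
    (U : Subgroup G) (hUopen : IsOpen (U : Set G)) :
    Nonempty ((SmoothIndInv k G V K U) ≃ₗ[k] (GroupoidLimit k G V K U)) :=
  ⟨LinearEquiv.ofEq _ _ (smoothIndInv_eq_groupoidLimit k G V K U hUopen)⟩

theorem statement0 (k G V : Type) [Field k] [Group G] [TopologicalSpace G]
    [IsTopologicalGroup G] [LocallyCompactSpace G] [TotallyDisconnectedSpace G] [T2Space G]
    [AddCommGroup V] [Module k V]
    (K : Subgroup G) [DistribMulAction ↥K V] [SMulCommClass ↥K k V]
    (hKopen : IsOpen (K : Set G)) (hKcomp : IsCompact (K : Set G))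
    (hV : SmoothAct ↥K V)
    (U : Subgroup G) (hUopen : IsOpen (U : Set G)) :
    Nonempty ((SmoothIndInv k G V K U) ≃ₗ[k] (GroupoidLimit k G V K U)) :=
  statement0_general k G V K U hUopen
end

section
/- Let G be a locally profinite group and K ⊆ G a compact open subgroup. If R ⊆ G is a set of representatives for the double cosets K\G/U for an open subgroup U ⊆ G, then evaluation f ↦ (f(x))_{x∈R} gives a k-linear isomorphism Ind_K^G(V)^U ≅ ∏_{x∈R} V^{K ∩ xUx⁻¹} for any smooth k-representation V of K. -/
section Mackey

variable {G : Type*} [Group G] {K U : Subgroup G} {R : Set G}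

theorem eq_of_mul_mul_eq_mul_mul
    (hRuniq : ∀ x ∈ R, ∀ y ∈ R, (∃ κ ∈ K, ∃ u ∈ U, y = κ * x * u) → x = y)
    {x y : G} (hx : x ∈ R) (hy : y ∈ R) {κ₁ κ₂ : K} {u₁ u₂ : G} (hu₁ : u₁ ∈ U) (hu₂ : u₂ ∈ U)
    (h : (κ₁ : G) * x * u₁ = κ₂ * y * u₂) : x = y :=
  hRuniq x hx y hy ⟨(κ₂ : G)⁻¹ * κ₁, mul_mem (inv_mem κ₂.2) κ₁.2,
    u₁ * u₂⁻¹, mul_mem hu₁ (inv_mem hu₂),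
    calc y = (κ₂ : G)⁻¹ * (κ₂ * y * u₂) * u₂⁻¹ := by group
      _ = (κ₂ : G)⁻¹ * κ₁ * x * (u₁ * u₂⁻¹) := by rw [← h]; group⟩

variable {V : Type*} [MulAction K V]

theorem smul_eq_smul_of_mul_mul_eq {x : G} {v : V}
    (hv : ∀ κ : K, (∃ u ∈ U, (κ : G) = x * u * x⁻¹) → κ • v = v)
    {κ₁ κ₂ : K} {u₁ u₂ : G} (hu₁ : u₁ ∈ U) (hu₂ : u₂ ∈ U)
    (h : (κ₁ : G) * x * u₁ = κ₂ * x * u₂) : κ₁ • v = κ₂ • v := by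
  have hconj : ((κ₂⁻¹ * κ₁ : K) : G) = x * (u₂ * u₁⁻¹) * x⁻¹ :=
    calc ((κ₂⁻¹ * κ₁ : K) : G) = (κ₂ : G)⁻¹ * (κ₁ * x * u₁) * u₁⁻¹ * x⁻¹ := by
          rw [Subgroup.coe_mul, Subgroup.coe_inv]; group
      _ = x * (u₂ * u₁⁻¹) * x⁻¹ := by rw [h]; group
  calc κ₁ • v = κ₂ • (κ₂⁻¹ * κ₁) • v := by rw [smul_smul, mul_inv_cancel_left]
    _ = κ₂ • v := by rw [hv _ ⟨_, mul_mem hu₂ (inv_mem hu₁), hconj⟩]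

theorem smul_apply_eq_of_eq_conj {f : G → V}
    (hf : ∀ (κ : K) (g : G), ∀ u ∈ U, f (κ * g * u) = κ • f g)
    (x : G) (κ : K) (hκ : ∃ u ∈ U, (κ : G) = x * u * x⁻¹) : κ • f x = f x := by
  obtain ⟨u, hu, hκ⟩ := hκ
  calc κ • f x = f (κ * x * 1) := (hf κ x 1 U.one_mem).symm
    _ = (1 : K) • f x := by rw [← hf 1 x u hu, hκ]; congr 1; push_cast; group
    _ = f x := one_smul _ _

theorem eq_of_eqOn_of_mul_mul
    (hRex : ∀ g : G, ∃ x ∈ R, ∃ κ ∈ K, ∃ u ∈ U, g = κ * x * u) {f₁ f₂ : G → V}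
    (hf₁ : ∀ (κ : K) (g : G), ∀ u ∈ U, f₁ (κ * g * u) = κ • f₁ g)
    (hf₂ : ∀ (κ : K) (g : G), ∀ u ∈ U, f₂ (κ * g * u) = κ • f₂ g)
    (h : Set.EqOn f₁ f₂ R) : f₁ = f₂ := by
  funext g
  obtain ⟨x, hx, κ, hκ, u, hu, rfl⟩ := hRex g
  exact (hf₁ ⟨κ, hκ⟩ x u hu).trans ((h hx).symm ▸ (hf₂ ⟨κ, hκ⟩ x u hu).symm)

theorem exists_extension_of_smul_eq
    (hRex : ∀ g : G, ∃ x ∈ R, ∃ κ ∈ K, ∃ u ∈ U, g = κ * x * u)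
    (hRuniq : ∀ x ∈ R, ∀ y ∈ R, (∃ κ ∈ K, ∃ u ∈ U, y = κ * x * u) → x = y)
    (c : R → V)
    (hc : ∀ (x : R) (κ : K), (∃ u ∈ U, (κ : G) = (x : G) * u * (x : G)⁻¹) → κ • c x = c x) :
    ∃ F : G → V, (∀ (κ : K) (g : G), ∀ u ∈ U, F (κ * g * u) = κ • F g) ∧
      ∀ x : R, F x = c x := by
  choose x hx κ hκ u hu hdec using hRex
  set F : G → V := fun g => (⟨κ g, hκ g⟩ : K) • c ⟨x g, hx g⟩
  have hF : ∀ (κ₀ : K) (y : R), ∀ u₀ ∈ U, F (κ₀ * y * u₀) = κ₀ • c y := by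
    rintro κ₀ ⟨y, hy⟩ u₀ hu₀
    set g := (κ₀ : G) * y * u₀
    have hxy : x g = y := eq_of_mul_mul_eq_mul_mul hRuniq (hx g) hy (κ₁ := ⟨κ g, hκ g⟩)
      (hu g) hu₀ (hdec g).symm
    have hrep : (⟨x g, hx g⟩ : R) = ⟨y, hy⟩ := Subtype.ext hxy
    change (⟨κ g, hκ g⟩ : K) • c ⟨x g, hx g⟩ = κ₀ • c ⟨y, hy⟩
    rw [hrep]
    have hg : κ g * y * u g = g := hxy ▸ (hdec g).symm
    exact smul_eq_smul_of_mul_mul_eq (hc ⟨y, hy⟩) (hu g) hu₀ hg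
  refine ⟨F, fun κ₀ g u₀ hu₀ => ?_, fun y => ?_⟩
  · calc F (κ₀ * g * u₀) = F ((κ₀ * ⟨κ g, hκ g⟩ : K) * x g * (u g * u₀)) := by
          conv_lhs => rw [hdec g]
          rw [Subgroup.coe_mul]; group
      _ = κ₀ • F g := by rw [hF _ ⟨x g, hx g⟩ _ (mul_mem (hu g) hu₀), mul_smul]
  · simpa using hF 1 y 1 U.one_mem

end Mackey

theorem mem_smoothIndInv_iff {k G V : Type} [Field k] [Group G] [TopologicalSpace G]
    [AddCommGroup V] [Module k V] {K : Subgroup G} [DistribMulAction K V]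
    [SMulCommClass K k V] {U : Subgroup G} (hU : IsOpen (U : Set G)) {f : G → V} :
    f ∈ SmoothIndInv k G V K U ↔ ∀ (κ : K) (g : G), ∀ u ∈ U, f (κ * g * u) = κ • f g := by
  constructor
  · rintro ⟨⟨hK, -⟩, hU⟩ κ g u hu
    rw [hU _ u hu, hK]
  · intro h
    have hU' : ∀ g : G, ∀ u ∈ U, f (g * u) = f g := fun g u hu => by
      simpa using h 1 g u hu
    exact ⟨⟨fun κ g => by simpa using h κ g 1 U.one_mem, U, hU, hU'⟩, hU'⟩

theorem statement1_general (k G V : Type) [Field k] [Group G] [TopologicalSpace G]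
    [AddCommGroup V] [Module k V]
    (K : Subgroup G) [DistribMulAction ↥K V] [SMulCommClass ↥K k V]
    (U : Subgroup G) (hUopen : IsOpen (U : Set G))
    (R : Set G)
    -- `R` is a set of representatives for the double cosets `K\G/U`:
    (hRex : ∀ g : G, ∃ x ∈ R, ∃ κ ∈ K, ∃ u ∈ U, g = κ * x * u)
    (hRuniq : ∀ x ∈ R, ∀ y ∈ R, (∃ κ ∈ K, ∃ u ∈ U, y = κ * x * u) → x = y) :
    -- the evaluation map `f ↦ (f x)_{x ∈ R}`
    Function.Injective
        (fun (f : SmoothIndInv k G V K U) (x : R) => (f : G → V) x) ∧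
    Set.range (fun (f : SmoothIndInv k G V K U) (x : R) => (f : G → V) x) =
      {c : R → V | ∀ (x : R) (κ : K),
        (∃ u ∈ U, (κ : G) = (x : G) * u * (x : G)⁻¹) → κ • c x = c x} ∧
    (∀ f g : SmoothIndInv k G V K U, ∀ x : R,
      ((f + g : SmoothIndInv k G V K U) : G → V) x = (f : G → V) x + (g : G → V) x) ∧
    (∀ (t : k) (f : SmoothIndInv k G V K U), ∀ x : R,
      ((t • f : SmoothIndInv k G V K U) : G → V) x = t • (f : G → V) x) := by
  have law (f : SmoothIndInv k G V K U) := (mem_smoothIndInv_iff hUopen).1 f.2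
  refine ⟨fun f₁ f₂ h => Subtype.ext <| eq_of_eqOn_of_mul_mul hRex (law f₁) (law f₂)
    fun x hx => congrFun h ⟨x, hx⟩, Set.ext fun c => ⟨?_, fun hc => ?_⟩,
    fun _ _ _ => rfl, fun _ _ _ => rfl⟩
  · rintro ⟨f, rfl⟩ x κ hκ
    exact smul_apply_eq_of_eq_conj (law f) x κ hκ
  · obtain ⟨F, hF, hFc⟩ := exists_extension_of_smul_eq hRex hRuniq c hc
    exact ⟨⟨F, (mem_smoothIndInv_iff hUopen).2 hF⟩, funext hFc⟩

theorem statement1 (k G V : Type) [Field k] [Group G] [TopologicalSpace G]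
    [IsTopologicalGroup G] [LocallyCompactSpace G] [TotallyDisconnectedSpace G] [T2Space G]
    [AddCommGroup V] [Module k V]
    (K : Subgroup G) [DistribMulAction ↥K V] [SMulCommClass ↥K k V]
    (hKopen : IsOpen (K : Set G)) (hKcomp : IsCompact (K : Set G))
    (hV : SmoothAct ↥K V)
    (U : Subgroup G) (hUopen : IsOpen (U : Set G))
    (R : Set G)
    -- `R` is a set of representatives for the double cosets `K\G/U`:
    (hRex : ∀ g : G, ∃ x ∈ R, ∃ κ ∈ K, ∃ u ∈ U, g = κ * x * u)
    (hRuniq : ∀ x ∈ R, ∀ y ∈ R, (∃ κ ∈ K, ∃ u ∈ U, y = κ * x * u) → x = y) :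
    -- the evaluation map `f ↦ (f x)_{x ∈ R}`
    Function.Injective
        (fun (f : SmoothIndInv k G V K U) (x : R) => (f : G → V) x) ∧
    Set.range (fun (f : SmoothIndInv k G V K U) (x : R) => (f : G → V) x) =
      {c : R → V | ∀ (x : R) (κ : K),
        (∃ u ∈ U, (κ : G) = (x : G) * u * (x : G)⁻¹) → κ • c x = c x} ∧
    (∀ f g : SmoothIndInv k G V K U, ∀ x : R,
      ((f + g : SmoothIndInv k G V K U) : G → V) x = (f : G → V) x + (g : G → V) x) ∧
    (∀ (t : k) (f : SmoothIndInv k G V K U), ∀ x : R,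
      ((t • f : SmoothIndInv k G V K U) : G → V) x = t • (f : G → V) x) :=
  statement1_general k G V K U hUopen R hRex hRuniq
end

section
/- Let G be a locally profinite group, K ⊆ G compact open, k a field. For V a smooth k-representation of K and W a smooth k-representation of G, there is a natural isomorphism of smooth G-representations Ind_K^G(Hom_sm(V, W|_K)) ≅ Hom_sm(ind_K^G V, W), where Hom_sm denotes the space of smooth k-linear maps (the smooth vectors of the Hom-space). -/
/-!
Every `f ∈ ind_K^G V` is the finite sum, over the cosets `K x` meeting its support, of the
functions `δ_x (f x)`, where `δ_g v` (`indSingle`) is supported on `K g` with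
`δ_g v (κ g) = κ • v`. Since `K` is open and `V` is smooth, `δ_g v` is fixed by right translations
by an open subgroup, so it lies in `ind_K^G V`. Thus `φ` is determined by `g ↦ g • φ ∘ δ_g`
(`homComponent`), and conversely `F` yields `f ↦ ∑_{K x} x⁻¹ • F x (f x)` (`indPairing`), whose
summand depends only on the coset `K x`. The identities `δ_{g u} = δ_g (· u)` and
`δ_{κ g} v = δ_g (κ⁻¹ • v)` carry smoothness and `K`-equivariance across, and `G`-equivariance
amounts to reindexing the sum by right translation of cosets.
-/

section Core

variable (k G V W : Type) [Field k] [Group G] [TopologicalSpace G] [IsTopologicalGroup G]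
  [AddCommGroup V] [Module k V] [AddCommGroup W] [Module k W]

variable (K : Subgroup G) [DistribMulAction ↥K V] [SMulCommClass ↥K k V]
  [DistribMulAction G W] [SMulCommClass G k W]

/-- The conjugation action of `κ ∈ K` on `k`-linear maps `V → W`:
`(κ ⋅ f)(v) = κ • f (κ⁻¹ • v)`. -/
def homAct (κ : ↥K) (f : V → W) : V → W := fun v => ((κ : G) • f (κ⁻¹ • v) : W)

/-- `Hom_sm(V, W|_K)`: the smooth vectors for the `K`-action on `Hom_k(V,W)`. -/
def SmoothHom : Submodule k (V → W) where
  carrier := {f | IsLinearMap k f ∧ ∃ U : Subgroup G, IsOpen (U : Set G) ∧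
      ∀ κ : ↥K, (κ : G) ∈ U → homAct G V W K κ f = f}
  add_mem' := by
    rintro f g ⟨hf1, U1, hU1, hf2⟩ ⟨hg1, U2, hU2, hg2⟩
    refine ⟨⟨fun a b => by simp [hf1.map_add, hg1.map_add, add_add_add_comm],
        fun c a => by simp [hf1.map_smul, hg1.map_smul]⟩, U1 ⊓ U2, ?_, ?_⟩
    · simpa using hU1.inter hU2
    · rintro κ ⟨h1, h2⟩
      have e1 := hf2 κ h1; have e2 := hg2 κ h2
      funext v
      simpa [homAct, smul_add] using congrFun (congrArg₂ (· + ·) e1 e2) v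
  zero_mem' := ⟨⟨fun a b => by simp, fun c a => by simp⟩, ⊤, by simpa using isOpen_univ,
      fun κ _ => by funext v; simp [homAct]⟩
  smul_mem' := by
    rintro c f ⟨hf1, U1, hU1, hf2⟩
    refine ⟨⟨fun a b => by simp [hf1.map_add, smul_add], fun t a => by
        simp only [Pi.smul_apply, hf1.map_smul]
        exact smul_comm c t (f a)⟩, U1, hU1, fun κ hκ => ?_⟩
    have := hf2 κ hκ
    funext v
    simpa [homAct, smul_comm] using congrArg (fun y => c • y) (congrFun this v)

end Core

section Core2

variable (k G V W : Type) [Field k] [Group G] [TopologicalSpace G] [IsTopologicalGroup G]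
  [AddCommGroup V] [Module k V] [AddCommGroup W] [Module k W]
  (K : Subgroup G) [DistribMulAction ↥K V] [SMulCommClass ↥K k V]
  [DistribMulAction G W] [SMulCommClass G k W]

/-- `Ind_K^G(Hom_sm(V, W|_K))`: functions `F : G → Hom_sm(V,W|_K)` with
`F (κ g) = κ ⋅ F g`, invariant under right translation by some open subgroup. -/
def IndSmoothHom : Submodule k (G → (V → W)) where
  carrier := {F | (∀ g : G, F g ∈ SmoothHom k G V W K) ∧
      (∀ (κ : ↥K) (g : G), F ((κ : G) * g) = homAct G V W K κ (F g)) ∧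
      ∃ U : Subgroup G, IsOpen (U : Set G) ∧ ∀ (g : G), ∀ u ∈ U, F (g * u) = F g}
  add_mem' := by
    rintro F F' ⟨hF0, hF1, U1, hU1, hF2⟩ ⟨hF0', hF1', U2, hU2, hF2'⟩
    refine ⟨fun g => add_mem (hF0 g) (hF0' g), fun κ g => ?_, U1 ⊓ U2, ?_, ?_⟩
    · funext v; simp [hF1 κ g, hF1' κ g, homAct, smul_add]
    · simpa using hU1.inter hU2
    · rintro g u ⟨hu1, hu2⟩
      simp [hF2 g u hu1, hF2' g u hu2]
  zero_mem' := ⟨fun g => zero_mem _, fun κ g => by funext v; simp [homAct],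
      ⊤, by simpa using isOpen_univ, fun g u _ => rfl⟩
  smul_mem' := by
    rintro c F ⟨hF0, hF1, U1, hU1, hF2⟩
    refine ⟨fun g => Submodule.smul_mem _ c (hF0 g), fun κ g => ?_, U1, hU1,
      fun g u hu => by simp [hF2 g u hu]⟩
    funext v
    simp only [Pi.smul_apply, hF1 κ g, homAct]
    exact (smul_comm ((κ : G)) c _).symm

/-- Compact induction `ind_K^G(V)`. -/
def CompactIndK : Submodule k (G → V) where
  carrier := {f | (∀ (κ : ↥K) (g : G), f ((κ : G) * g) = κ • f g) ∧
      (∃ U : Subgroup G, IsOpen (U : Set G) ∧ ∀ (g : G), ∀ u ∈ U, f (g * u) = f g) ∧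
      ∃ S : Finset G, ∀ g : G, f g ≠ 0 → ∃ s ∈ S, ∃ κ ∈ K, g = κ * s}
  add_mem' := by
    classical
    rintro f g ⟨hf1, ⟨U1, hU1, hf2⟩, Sf, hSf⟩ ⟨hg1, ⟨U2, hU2, hg2⟩, Sg, hSg⟩
    refine ⟨fun κ x => by simp [hf1, hg1, smul_add], ⟨U1 ⊓ U2, by
        simpa using hU1.inter hU2, ?_⟩, Sf ∪ Sg, fun x hx => ?_⟩
    · rintro x u ⟨hu1, hu2⟩
      simp [hf2 x u hu1, hg2 x u hu2]
    · by_cases h1 : f x = 0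
      · rcases hSg x (by simpa [h1] using hx) with ⟨s, hs, hk⟩
        exact ⟨s, Finset.mem_union_right _ hs, hk⟩
      · rcases hSf x h1 with ⟨s, hs, hk⟩
        exact ⟨s, Finset.mem_union_left _ hs, hk⟩
  zero_mem' := ⟨fun κ g => by simp, ⟨⊤, by simpa using isOpen_univ, fun g u _ => rfl⟩,
      ∅, fun g hg => absurd rfl hg⟩
  smul_mem' := by
    rintro c f ⟨hf1, ⟨U1, hU1, hf2⟩, Sf, hSf⟩
    refine ⟨fun κ x => by simp [hf1, smul_comm], ⟨U1, hU1, fun g u hu => by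
        simp [hf2 g u hu]⟩, Sf, fun x hx => hSf x fun h => ?_⟩
    simp [h] at hx

/-- Right translation by `g` on `ind_K^G(V)`. -/
def rtK (g : G) (f : ↥(CompactIndK k G V K)) : ↥(CompactIndK k G V K) := by
  classical
  refine ⟨fun h => (f : G → V) (h * g), ?_, ?_, ?_⟩
  · rcases f.2 with ⟨h1, _, _⟩
    intro κ x
    simpa [mul_assoc] using h1 κ (x * g)
  · rcases f.2 with ⟨_, ⟨U, hU, h2⟩, _⟩
    refine ⟨Subgroup.map (MulAut.conj g).toMonoidHom U, ?_, ?_⟩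
    · have : ((Subgroup.map (MulAut.conj g).toMonoidHom U : Subgroup G) : Set G) =
          (fun x => g * x * g⁻¹) '' (U : Set G) := by
        ext x; simp [MulAut.conj_apply]
      rw [this]
      have hmap : IsOpenMap (fun x : G => g * x * g⁻¹) := by
        have h1 : IsOpenMap (fun x : G => x * g⁻¹) := (Homeomorph.mulRight g⁻¹).isOpenMap
        have h2 : IsOpenMap (fun x : G => g * x) := (Homeomorph.mulLeft g).isOpenMap
        have := h2.comp h1
        convert this using 1
        funext x
        simp [mul_assoc]
      exact hmap _ hU
    · rintro x u hu
      rcases Subgroup.mem_map.mp hu with ⟨u₀, hu₀, rfl⟩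
      show (f : G → V) (x * (MulAut.conj g).toMonoidHom u₀ * g) = (f : G → V) (x * g)
      have e : x * (MulAut.conj g).toMonoidHom u₀ * g = (x * g) * u₀ := by
        simp [MulAut.conj_apply]; group
      rw [e, h2 (x * g) u₀ hu₀]
  · rcases f.2 with ⟨_, _, S, hS⟩
    refine ⟨S.image (fun s => s * g⁻¹), fun x hx => ?_⟩
    rcases hS (x * g) hx with ⟨s, hs, κ, hκ, hxg⟩
    refine ⟨s * g⁻¹, Finset.mem_image_of_mem _ hs, κ, hκ, ?_⟩
    have : x = κ * s * g⁻¹ := by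
      rw [← hxg]; group
    simpa [mul_assoc] using this

/-- The `G`-action on maps `ind_K^G(V) → W`: `(g ⋅ φ)(f) = g • φ (g⁻¹ ⋅ f)`. -/
def indAct (g : G) (φ : ↥(CompactIndK k G V K) → W) : ↥(CompactIndK k G V K) → W :=
  fun f => g • φ (rtK k G V K g⁻¹ f)

/-- `Hom_sm(ind_K^G V, W)`: the smooth vectors of `Hom_k(ind_K^G V, W)`. -/
def SmoothHomInd : Submodule k (↥(CompactIndK k G V K) → W) where
  carrier := {φ | IsLinearMap k φ ∧ ∃ U : Subgroup G, IsOpen (U : Set G) ∧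
      ∀ g ∈ U, indAct k G V W K g φ = φ}
  add_mem' := by
    rintro φ ψ ⟨hφ1, U1, hU1, hφ2⟩ ⟨hψ1, U2, hU2, hψ2⟩
    refine ⟨⟨fun a b => by simp [hφ1.map_add, hψ1.map_add, add_add_add_comm],
        fun c a => by simp [hφ1.map_smul, hψ1.map_smul]⟩, U1 ⊓ U2, ?_, ?_⟩
    · simpa using hU1.inter hU2
    · rintro g ⟨h1, h2⟩
      funext f
      simpa [indAct, smul_add] using
        congrFun (congrArg₂ (· + ·) (hφ2 g h1) (hψ2 g h2)) f
  zero_mem' := ⟨⟨fun a b => by simp, fun c a => by simp⟩, ⊤, by simpa using isOpen_univ,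
      fun g _ => by funext f; simp [indAct]⟩
  smul_mem' := by
    rintro c φ ⟨hφ1, U1, hU1, hφ2⟩
    refine ⟨⟨fun a b => by simp [hφ1.map_add, smul_add], fun t a => by
        simp only [Pi.smul_apply, hφ1.map_smul]
        exact smul_comm c t (φ a)⟩, U1, hU1, fun g hg => ?_⟩
    funext f
    simpa [indAct, smul_comm] using congrArg (fun y => c • y) (congrFun (hφ2 g hg) f)

end Core2

section RightCosets

variable {G : Type*} [Group G]

abbrev RightCosets (K : Subgroup G) : Type _ := Quotient (QuotientGroup.rightRel K)

variable {K : Subgroup G}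

theorem RightCosets.mk_eq_mk_iff {x y : G} :
    (Quotient.mk _ x : RightCosets K) = Quotient.mk _ y ↔ y * x⁻¹ ∈ K :=
  Quotient.eq.trans QuotientGroup.rightRel_apply

theorem RightCosets.exists_eq_mul_of_mk_eq {x y : G}
    (h : (Quotient.mk _ x : RightCosets K) = Quotient.mk _ y) : ∃ κ : K, y = κ * x :=
  ⟨⟨y * x⁻¹, RightCosets.mk_eq_mk_iff.mp h⟩, by simp⟩

def RightCosets.mulRight (g : G) : RightCosets K ≃ RightCosets K :=
  Quotient.congr (Equiv.mulRight g) fun a b => by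
    simp only [QuotientGroup.rightRel_apply, Equiv.coe_mulRight, mul_inv_rev, ← mul_assoc,
      mul_inv_cancel_right]

end RightCosets

section Conjugation

variable {G : Type*} [Group G] [TopologicalSpace G] [IsTopologicalGroup G]

theorem Subgroup.isOpen_comap_conj {U : Subgroup G} (hU : IsOpen (U : Set G)) (g : G) :
    IsOpen ((U.comap (MulAut.conj g).toMonoidHom : Subgroup G) : Set G) :=
  hU.preimage (show Continuous fun x => g * x * g⁻¹ by fun_prop)

end Conjugation

noncomputable section Frobenius

open Function

variable {k G V W : Type} [Field k] [Group G] [TopologicalSpace G]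
  [AddCommGroup V] [Module k V] [AddCommGroup W] [Module k W]
  {K : Subgroup G} [DistribMulAction ↥K V] [DistribMulAction G W] [SMulCommClass G k W]

theorem IndSmoothHom.isLinearMap (F : IndSmoothHom k G V W K) (x : G) :
    IsLinearMap k ((F : G → V → W) x) :=
  (F.2.1 x).1

theorem IndSmoothHom.apply_mul_left (F : IndSmoothHom k G V W K) (κ : K) (x : G) :
    (F : G → V → W) (κ * x) = homAct G V W K κ ((F : G → V → W) x) :=
  F.2.2.1 κ x

variable [SMulCommClass ↥K k V]

theorem CompactIndK.apply_mul_left (f : CompactIndK k G V K) (κ : K) (x : G) :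
    (f : G → V) (κ * x) = κ • (f : G → V) x :=
  f.2.1 κ x

theorem CompactIndK.hasFiniteSupport_of_apply_ne_zero {M : Type*} [Zero M]
    (f : CompactIndK k G V K) (c : RightCosets K → M)
    (hc : ∀ x, c (Quotient.mk _ x) ≠ 0 → (f : G → V) x ≠ 0) : HasFiniteSupport c := by
  obtain ⟨S, hS⟩ := f.2.2.2
  refine (S.finite_toSet.image (Quotient.mk _)).subset fun q hq => ?_
  induction q using Quotient.inductionOn with | h x => ?_
  obtain ⟨s, hs, κ, hκ, rfl⟩ := hS x (hc x hq)
  exact ⟨s, hs, RightCosets.mk_eq_mk_iff.mpr (by simpa using hκ)⟩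

theorem IndSmoothHom.inv_smul_apply_mul_left (F : IndSmoothHom k G V W K)
    (f : CompactIndK k G V K) (κ : K) (x : G) :
    ((κ : G) * x)⁻¹ • (F : G → V → W) (κ * x) ((f : G → V) (κ * x)) =
      x⁻¹ • (F : G → V → W) x ((f : G → V) x) := by
  rw [IndSmoothHom.apply_mul_left F, CompactIndK.apply_mul_left f, homAct, inv_smul_smul,
    mul_inv_rev, mul_smul, inv_smul_smul]

def cosetPairing (F : IndSmoothHom k G V W K) (f : CompactIndK k G V K) : RightCosets K → W :=
  Quotient.lift (fun x => x⁻¹ • (F : G → V → W) x ((f : G → V) x)) fun a b hab => by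
    obtain ⟨κ, rfl⟩ := RightCosets.exists_eq_mul_of_mk_eq (Quotient.sound hab)
    exact (IndSmoothHom.inv_smul_apply_mul_left F f κ a).symm

theorem cosetPairing_mk (F : IndSmoothHom k G V W K) (f : CompactIndK k G V K) (x : G) :
    cosetPairing F f (Quotient.mk _ x) = x⁻¹ • (F : G → V → W) x ((f : G → V) x) :=
  rfl

theorem hasFiniteSupport_cosetPairing (F : IndSmoothHom k G V W K) (f : CompactIndK k G V K) :
    HasFiniteSupport (cosetPairing F f) :=
  CompactIndK.hasFiniteSupport_of_apply_ne_zero f _ fun x hx hfx =>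
    hx (by rw [cosetPairing_mk, hfx, (IndSmoothHom.isLinearMap F x).map_zero, smul_zero])

def indPairing (F : IndSmoothHom k G V W K) (f : CompactIndK k G V K) : W :=
  ∑ᶠ q, cosetPairing F f q

theorem indPairing_add_left (F F' : IndSmoothHom k G V W K) (f : CompactIndK k G V K) :
    indPairing (F + F') f = indPairing F f + indPairing F' f := by
  rw [indPairing, indPairing, indPairing,
    ← finsum_add_distrib (hasFiniteSupport_cosetPairing F f) (hasFiniteSupport_cosetPairing F' f)]
  congr 1 with q
  induction q using Quotient.inductionOn with | h x => exact smul_add _ _ _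

theorem indPairing_smul_left (c : k) (F : IndSmoothHom k G V W K) (f : CompactIndK k G V K) :
    indPairing (c • F) f = c • indPairing F f := by
  rw [indPairing, indPairing, smul_finsum' c (hasFiniteSupport_cosetPairing F f)]
  congr 1 with q
  induction q using Quotient.inductionOn with | h x => exact smul_comm _ c _

theorem indPairing_add_right (F : IndSmoothHom k G V W K) (f f' : CompactIndK k G V K) :
    indPairing F (f + f') = indPairing F f + indPairing F f' := by
  rw [indPairing, indPairing, indPairing,
    ← finsum_add_distrib (hasFiniteSupport_cosetPairing F f) (hasFiniteSupport_cosetPairing F f')]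
  congr 1 with q
  induction q using Quotient.inductionOn with | h x =>
    simp only [cosetPairing_mk, Submodule.coe_add, Pi.add_apply,
      (IndSmoothHom.isLinearMap F x).map_add, smul_add]

theorem indPairing_smul_right (F : IndSmoothHom k G V W K) (c : k) (f : CompactIndK k G V K) :
    indPairing F (c • f) = c • indPairing F f := by
  rw [indPairing, indPairing, smul_finsum' c (hasFiniteSupport_cosetPairing F f)]
  congr 1 with q
  induction q using Quotient.inductionOn with | h x =>
    simp only [cosetPairing_mk, Submodule.coe_smul, Pi.smul_apply,
      (IndSmoothHom.isLinearMap F x).map_smul]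
    exact smul_comm _ c _

variable [IsTopologicalGroup G]

theorem indPairing_of_eq_mul_right {F F' : IndSmoothHom k G V W K} {g : G}
    (hF' : (F' : G → V → W) = fun x => (F : G → V → W) (x * g)) (f : CompactIndK k G V K) :
    indPairing F' f = indAct k G V W K g (indPairing F) f := by
  rw [indAct, indPairing, indPairing, smul_finsum' g (hasFiniteSupport_cosetPairing F _),
    ← finsum_comp_equiv (RightCosets.mulRight g) (f := fun q => g • cosetPairing F _ q)]
  congr 1 with q
  induction q using Quotient.inductionOn with | h x =>
    show x⁻¹ • (F' : G → V → W) x ((f : G → V) x) =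
      g • ((x * g)⁻¹ • (F : G → V → W) (x * g) ((f : G → V) (x * g * g⁻¹)))
    rw [hF', mul_inv_cancel_right, ← mul_smul, mul_inv_rev, mul_inv_cancel_left]

theorem indPairing_mem (F : IndSmoothHom k G V W K) : indPairing F ∈ SmoothHomInd k G V W K := by
  obtain ⟨U, hU, hFU⟩ := F.2.2.2
  exact ⟨⟨indPairing_add_right F, indPairing_smul_right F⟩, U, hU, fun g hg =>
    funext fun f => (indPairing_of_eq_mul_right (funext fun x => (hFU x g hg).symm) f).symm⟩

end Frobenius

noncomputable section Single

open scoped Classical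

variable {G V : Type} [Group G] [AddCommGroup V] {K : Subgroup G} [DistribMulAction ↥K V]

variable (K) in
def indSingleFun (g : G) (v : V) : G → V := fun x =>
  if h : x * g⁻¹ ∈ K then (⟨x * g⁻¹, h⟩ : K) • v else 0

theorem indSingleFun_self (g : G) (v : V) : indSingleFun K g v g = v := by
  have h1 : (⟨g * g⁻¹, by simp⟩ : K) = 1 := Subtype.ext (mul_inv_cancel g)
  rw [indSingleFun, dif_pos (by simp), h1, one_smul]

theorem indSingleFun_of_notMem {g x : G} (h : x * g⁻¹ ∉ K) (v : V) :
    indSingleFun K g v x = 0 :=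
  dif_neg h

theorem indSingleFun_mul_left (g : G) (v : V) (κ : K) (x : G) :
    indSingleFun K g v (κ * x) = κ • indSingleFun K g v x := by
  by_cases h : x * g⁻¹ ∈ K
  · have hκ : (κ : G) * x * g⁻¹ ∈ K := by simpa [mul_assoc] using K.mul_mem κ.2 h
    rw [indSingleFun, dif_pos hκ, indSingleFun, dif_pos h, ← mul_smul]
    exact congrArg (· • v) (Subtype.ext (mul_assoc _ _ _))
  · have hκ : (κ : G) * x * g⁻¹ ∉ K := fun hκ =>
      h (by simpa [mul_assoc] using K.mul_mem (K.inv_mem κ.2) hκ)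
    rw [indSingleFun_of_notMem hκ, indSingleFun_of_notMem h, smul_zero]

theorem indSingleFun_mul_right (g h : G) (v : V) (x : G) :
    indSingleFun K g v (x * h) = indSingleFun K (g * h⁻¹) v x := by
  have e : x * (g * h⁻¹)⁻¹ = x * h * g⁻¹ := by group
  simp only [indSingleFun, e]

theorem indSingleFun_conj (g : G) (v : V) (κ : K) :
    indSingleFun K (κ * g) v = indSingleFun K g (κ⁻¹ • v) := by
  funext x
  have e : x * ((κ : G) * g)⁻¹ = x * g⁻¹ * (κ : G)⁻¹ := by group
  by_cases h : x * g⁻¹ ∈ K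
  · have hκ : x * ((κ : G) * g)⁻¹ ∈ K := e ▸ K.mul_mem h (K.inv_mem κ.2)
    rw [indSingleFun, dif_pos hκ, indSingleFun, dif_pos h, ← mul_smul]
    exact congrArg (· • v) (Subtype.ext e)
  · have hκ : x * ((κ : G) * g)⁻¹ ∉ K := fun hκ =>
      h (inv_mul_cancel_right (x * g⁻¹) (κ : G) ▸ K.mul_mem (e ▸ hκ) κ.2)
    rw [indSingleFun_of_notMem hκ, indSingleFun_of_notMem h]

end Single

noncomputable section Inverse

variable {k G V W : Type} [Field k] [Group G] [TopologicalSpace G] [IsTopologicalGroup G]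
  [AddCommGroup V] [Module k V]
  {K : Subgroup G} [DistribMulAction ↥K V] [SMulCommClass ↥K k V]

theorem indSingleFun_mem (hK : IsOpen (K : Set G)) (hV : SmoothAct K V) (g : G) (v : V) :
    indSingleFun K g v ∈ CompactIndK k G V K := by
  obtain ⟨U, hU, hUv⟩ := hV v
  have hUG : IsOpen ((U.map K.subtype : Subgroup G) : Set G) := by
    rw [Subgroup.coe_map]
    exact hK.isOpenMap_subtype_val _ hU
  refine ⟨indSingleFun_mul_left g v, ⟨(U.map K.subtype).comap (MulAut.conj g).toMonoidHom,
    Subgroup.isOpen_comap_conj hUG g, fun x y hy => ?_⟩, {g}, fun x hx => ?_⟩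
  · obtain ⟨u, hu, hug⟩ := Subgroup.mem_map.mp hy
    have hgy : g * y⁻¹ = (u⁻¹ : K) * g := by
      simp only [Subgroup.coe_subtype, MulEquiv.coe_toMonoidHom, MulAut.conj_apply] at hug
      rw [Subgroup.coe_inv, hug]
      group
    rw [indSingleFun_mul_right, hgy, indSingleFun_conj, inv_inv, hUv u hu]
  · exact ⟨g, Finset.mem_singleton_self g, x * g⁻¹,
      not_not.mp (mt (indSingleFun_of_notMem · v) hx), by group⟩

variable (hK : IsOpen (K : Set G)) (hV : SmoothAct K V)

def indSingle (g : G) : V →ₗ[k] CompactIndK k G V K where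
  toFun v := ⟨indSingleFun K g v, indSingleFun_mem hK hV g v⟩
  map_add' v w := Subtype.ext <| funext fun x => by
    simp only [indSingleFun, Submodule.coe_add, Pi.add_apply]
    split_ifs <;> simp [smul_add]
  map_smul' c v := Subtype.ext <| funext fun x => by
    simp only [indSingleFun, Submodule.coe_smul, Pi.smul_apply, RingHom.id_apply]
    split_ifs
    · exact smul_comm _ c v
    · exact (smul_zero c).symm

theorem coe_indSingle (g : G) (v : V) :
    ((indSingle hK hV g v : CompactIndK k G V K) : G → V) = indSingleFun K g v :=
  rfl

theorem indSingle_conj (g : G) (v : V) (κ : K) :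
    indSingle hK hV (κ * g) v = indSingle (k := k) hK hV g (κ⁻¹ • v) :=
  Subtype.ext (indSingleFun_conj g v κ)

theorem rtK_indSingle (g h : G) (v : V) :
    rtK k G V K h (indSingle hK hV g v) = indSingle hK hV (g * h⁻¹) v :=
  Subtype.ext (funext (indSingleFun_mul_right g h v))

variable [AddCommGroup W] [DistribMulAction G W]

def homComponent (φ : CompactIndK k G V K → W) (g : G) (v : V) : W :=
  g • φ (indSingle hK hV g v)

theorem homComponent_mul_left (φ : CompactIndK k G V K → W) (κ : K) (g : G) :
    homComponent hK hV φ (κ * g) = homAct G V W K κ (homComponent hK hV φ g) := by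
  funext v
  rw [homComponent, indSingle_conj, mul_smul]
  rfl

theorem apply_rtK_of_forall_indAct_eq {φ : CompactIndK k G V K → W} {U : Subgroup G}
    (hφ : ∀ u ∈ U, indAct k G V W K u φ = φ) {u : G} (hu : u ∈ U) (f : CompactIndK k G V K) :
    φ (rtK k G V K u f) = u • φ f := by
  have h := congrFun (hφ u⁻¹ (U.inv_mem hu)) f
  rw [indAct, inv_inv] at h
  rw [← h, smul_inv_smul]

theorem homComponent_mul_right {φ : CompactIndK k G V K → W} {U : Subgroup G}
    (hφ : ∀ u ∈ U, indAct k G V W K u φ = φ) {u : G} (hu : u ∈ U) (g : G) :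
    homComponent hK hV φ (g * u) = homComponent hK hV φ g := by
  funext v
  have h : indSingle hK hV (g * u) v = rtK k G V K u⁻¹ (indSingle hK hV g v) := by
    rw [rtK_indSingle, inv_inv]
  rw [homComponent, homComponent, h, apply_rtK_of_forall_indAct_eq hφ (U.inv_mem hu), mul_smul,
    smul_inv_smul]

variable [Module k W] [SMulCommClass G k W]

theorem homComponent_isLinearMap {φ : CompactIndK k G V K → W} (hφ : IsLinearMap k φ) (g : G) :
    IsLinearMap k (homComponent hK hV φ g) :=
  ((DistribSMul.toLinearMap k W g).comp
    ((IsLinearMap.mk' φ hφ).comp (indSingle hK hV g))).isLinear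

theorem homComponent_mem {φ : CompactIndK k G V K → W} (hφ : φ ∈ SmoothHomInd k G V W K) :
    homComponent hK hV φ ∈ IndSmoothHom k G V W K := by
  obtain ⟨hlin, U, hU, hφU⟩ := hφ
  refine ⟨fun g => ⟨homComponent_isLinearMap hK hV hlin g,
    U.comap (MulAut.conj g⁻¹).toMonoidHom, Subgroup.isOpen_comap_conj hU g⁻¹, fun κ hκ => ?_⟩,
    homComponent_mul_left hK hV φ, U, hU, fun g u hu => homComponent_mul_right hK hV hφU hu g⟩
  rw [← homComponent_mul_left, show (κ : G) * g = g * (g⁻¹ * κ * g) by group,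
    homComponent_mul_right hK hV hφU _ g]
  simpa using hκ

end Inverse

noncomputable section Reciprocity

open Function

variable {k G V W : Type} [Field k] [Group G] [TopologicalSpace G] [IsTopologicalGroup G]
  [AddCommGroup V] [Module k V] [AddCommGroup W] [Module k W]
  {K : Subgroup G} [DistribMulAction ↥K V] [SMulCommClass ↥K k V]
  [DistribMulAction G W] [SMulCommClass G k W]
  (hK : IsOpen (K : Set G)) (hV : SmoothAct K V)

theorem indPairing_indSingle (F : IndSmoothHom k G V W K) (g : G) (v : V) :
    indPairing F (indSingle hK hV g v) = g⁻¹ • (F : G → V → W) g v := by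
  rw [indPairing, finsum_eq_single _ (Quotient.mk _ g)]
  · rw [cosetPairing_mk, coe_indSingle, indSingleFun_self]
  · intro q hq
    induction q using Quotient.inductionOn with | h x => ?_
    have hx : x * g⁻¹ ∉ K := fun h => hq (RightCosets.mk_eq_mk_iff.mpr h).symm
    rw [cosetPairing_mk, coe_indSingle, indSingleFun_of_notMem hx,
      (IndSmoothHom.isLinearMap F x).map_zero, smul_zero]

theorem homComponent_indPairing (F : IndSmoothHom k G V W K) :
    homComponent hK hV (indPairing F) = F := by
  funext g v
  rw [homComponent, indPairing_indSingle, smul_inv_smul]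

def cosetSingle (f : CompactIndK k G V K) : RightCosets K → CompactIndK k G V K :=
  Quotient.lift (fun x => indSingle hK hV x ((f : G → V) x)) fun a b hab => by
    obtain ⟨κ, rfl⟩ := RightCosets.exists_eq_mul_of_mk_eq (Quotient.sound hab)
    rw [indSingle_conj, CompactIndK.apply_mul_left, inv_smul_smul]

theorem hasFiniteSupport_cosetSingle (f : CompactIndK k G V K) :
    HasFiniteSupport (cosetSingle hK hV f) :=
  CompactIndK.hasFiniteSupport_of_apply_ne_zero f _ fun x hx hfx =>
    hx (by rw [cosetSingle, Quotient.lift_mk, hfx, map_zero])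

theorem finsum_cosetSingle (f : CompactIndK k G V K) : ∑ᶠ q, cosetSingle hK hV f q = f := by
  refine Subtype.ext (funext fun x => ?_)
  let ev : CompactIndK k G V K →ₗ[k] V := LinearMap.proj x ∘ₗ (CompactIndK k G V K).subtype
  change ev (∑ᶠ q, _) = ev f
  rw [map_finsum ev (hasFiniteSupport_cosetSingle hK hV f),
    finsum_eq_single _ (Quotient.mk _ x)]
  · exact indSingleFun_self x ((f : G → V) x)
  · intro q hq
    induction q using Quotient.inductionOn with | h y => ?_
    exact indSingleFun_of_notMem (fun h => hq (RightCosets.mk_eq_mk_iff.mpr h)) _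

theorem indPairing_homComponent {φ : CompactIndK k G V K → W}
    (hφ : φ ∈ SmoothHomInd k G V W K) (f : CompactIndK k G V K) :
    indPairing ⟨homComponent hK hV φ, homComponent_mem hK hV hφ⟩ f = φ f := by
  have hpt : ∀ q, cosetPairing ⟨homComponent hK hV φ, homComponent_mem hK hV hφ⟩ f q =
      IsLinearMap.mk' φ hφ.1 (cosetSingle hK hV f q) := by
    intro q
    induction q using Quotient.inductionOn with | h x => exact inv_smul_smul x _
  rw [indPairing, finsum_congr hpt, ← map_finsum _ (hasFiniteSupport_cosetSingle hK hV f),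
    finsum_cosetSingle]
  rfl

def indHomEquiv : IndSmoothHom k G V W K ≃ₗ[k] SmoothHomInd k G V W K where
  toFun F := ⟨indPairing F, indPairing_mem F⟩
  map_add' F F' := Subtype.ext (funext (indPairing_add_left F F'))
  map_smul' c F := Subtype.ext (funext (indPairing_smul_left c F))
  invFun φ := ⟨homComponent hK hV φ, homComponent_mem hK hV φ.2⟩
  left_inv F := Subtype.ext (homComponent_indPairing hK hV F)
  right_inv φ := Subtype.ext (funext (indPairing_homComponent hK hV φ.2))

end Reciprocity

theorem statement2_general (k G V W : Type) [Field k] [Group G] [TopologicalSpace G]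
    [IsTopologicalGroup G] [AddCommGroup V] [Module k V] [AddCommGroup W] [Module k W]
    (K : Subgroup G) [DistribMulAction ↥K V] [SMulCommClass ↥K k V]
    [DistribMulAction G W] [SMulCommClass G k W]
    (hKopen : IsOpen (K : Set G)) (hV : SmoothAct ↥K V) :
    ∃ E : ↥(IndSmoothHom k G V W K) ≃ₗ[k] ↥(SmoothHomInd k G V W K),
      -- `E` is `G`-equivariant, where `G` acts on `Ind_K^G(Hom_sm(V,W|_K))` by right
      -- translation and on `Hom_sm(ind_K^G V, W)` by `(g ⋅ φ)(f) = g • φ(g⁻¹ ⋅ f)`: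
      ∀ (g : G) (F F' : ↥(IndSmoothHom k G V W K)),
        (F' : G → (V → W)) = (fun h => (F : G → (V → W)) (h * g)) →
        ((E F' : ↥(SmoothHomInd k G V W K)) : ↥(CompactIndK k G V K) → W) =
          indAct k G V W K g ((E F : ↥(SmoothHomInd k G V W K)) :
            ↥(CompactIndK k G V K) → W) :=
  ⟨indHomEquiv hKopen hV, fun _ _ _ hF' => funext (indPairing_of_eq_mul_right hF')⟩

theorem statement2 (k G V W : Type) [Field k] [Group G] [TopologicalSpace G]
    [IsTopologicalGroup G] [LocallyCompactSpace G] [TotallyDisconnectedSpace G] [T2Space G]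
    [AddCommGroup V] [Module k V] [AddCommGroup W] [Module k W]
    (K : Subgroup G) [DistribMulAction ↥K V] [SMulCommClass ↥K k V]
    [DistribMulAction G W] [SMulCommClass G k W]
    (hKopen : IsOpen (K : Set G)) (hKcomp : IsCompact (K : Set G))
    (hV : SmoothAct ↥K V) (hW : SmoothAct G W) :
    ∃ E : ↥(IndSmoothHom k G V W K) ≃ₗ[k] ↥(SmoothHomInd k G V W K),
      -- `E` is `G`-equivariant, where `G` acts on `Ind_K^G(Hom_sm(V,W|_K))` by right
      -- translation and on `Hom_sm(ind_K^G V, W)` by `(g ⋅ φ)(f) = g • φ(g⁻¹ ⋅ f)`: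
      ∀ (g : G) (F F' : ↥(IndSmoothHom k G V W K)),
        (F' : G → (V → W)) = (fun h => (F : G → (V → W)) (h * g)) →
        ((E F' : ↥(SmoothHomInd k G V W K)) : ↥(CompactIndK k G V K) → W) =
          indAct k G V W K g ((E F : ↥(SmoothHomInd k G V W K)) :
            ↥(CompactIndK k G V K) → W) :=
  statement2_general k G V W K hKopen hV
end
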